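/- arXiv:1509.06701 — 2 statements merged into one kernel-verified Lean document; each statement's English description precedes it below -/
import Mathlib

section
/- Let Γ ∼ ε_p be an Erdős–Rényi random graph with parameter p ∈ [0,1]. Then for every finite graph F on [m], the limiting density δ(F,Γ) = lim_{n→∞} ind(F, Γ|[n])/n^{↓m} exists almost surely and equals ∏_{1≤i<j≤m} p^{F(i,j)} (1-p)^{1-F(i,j)}; in particular the graph limit of Γ is deterministic. -/
open MeasureTheory

/-- A countable graph: a symmetric `{0,1}`-valued array on `ℕ × ℕ` with zero diagonal. -/
def CGraph : Type := {f : ℕ → ℕ → Bool // (∀ i j, f i j = f j i) ∧ ∀ i, f i i = false}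

instance : MeasurableSpace CGraph := by unfold CGraph; infer_instance

instance : TopologicalSpace CGraph := by unfold CGraph; infer_instance

/-- A finite graph on vertex set `[n]`. -/
def FinGraph (n : ℕ) : Type :=
  {f : Fin n → Fin n → Bool // (∀ i j, f i j = f j i) ∧ ∀ i, f i i = false}

/-- The restriction `G|[n]` of a countable graph to its first `n` vertices. -/
def restrictG (n : ℕ) (G : CGraph) : FinGraph n :=
  ⟨fun i j => G.1 i j, fun i j => G.2.1 _ _, fun i => G.2.2 _⟩

/-- Index type for the upper-triangular pairs `(i,j)`, `i < j`. -/
def UPair : Type := {q : ℕ × ℕ // q.1 < q.2}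

/-- The event that the edge `q` is present. -/
def edgeEvent (q : UPair) : Set CGraph := {G : CGraph | G.1 q.1.1 q.1.2 = true}

/-- The number of embeddings of `F` (on `[m]`) into `G` (on `[n]`). -/
noncomputable def ind {m n : ℕ} (F : FinGraph m) (G : FinGraph n) : ℕ :=
  Fintype.card {φ : Fin m ↪ Fin n // ∀ i j, G.1 (φ i) (φ j) = F.1 i j}

/-!
For an injection `φ : [m] ↪ [n]`, the event that `φ` embeds `F` into `Γ` is an intersection of
`m.choose 2` events about distinct edges of `Γ`, so it has probability
`θ = ∏_{i<j} p^{F(i,j)} (1-p)^{1-F(i,j)}` and `𝔼[ind(F, Γ|[n])] = n^{↓m} θ`. Two such events are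
independent unless the images of the two injections share two vertices, and there are at most
`m⁴ n^{↓m} n^{m-2}` such pairs; hence `Var[ind(F, Γ|[n])] ≤ m⁴ n^{↓m} n^{m-2}`. Chebyshev bounds
`P(|ind(F, Γ|[n]) / n^{↓m} - θ| ≥ ε)` by `m⁴ 2^m / (ε² n²)` once `n ≥ 2m`, which is summable,
so Borel–Cantelli gives almost sure convergence.
-/

open Filter Topology MeasureTheory ProbabilityTheory Finset

namespace ProbabilityTheory

variable {Ω : Type*} [MeasurableSpace Ω] {μ : Measure Ω} [IsProbabilityMeasure μ]

lemma covariance_indicator_one {s t : Set Ω} (hs : MeasurableSet s) (ht : MeasurableSet t) :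
    cov[s.indicator (1 : Ω → ℝ), t.indicator 1; μ] = μ.real (s ∩ t) - μ.real s * μ.real t := by
  have hs2 : MemLp (s.indicator (1 : Ω → ℝ)) 2 μ := memLp_indicator_const 2 hs 1 (by simp)
  have ht2 : MemLp (t.indicator (1 : Ω → ℝ)) 2 μ := memLp_indicator_const 2 ht 1 (by simp)
  rw [covariance_eq_sub hs2 ht2, ← Set.inter_indicator_one,
    integral_indicator_one (hs.inter ht), integral_indicator_one hs, integral_indicator_one ht]

lemma variance_sum_indicator_one_le {ι : Type*} [Fintype ι] {s : ι → Set Ω}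
    (hs : ∀ i, MeasurableSet (s i)) :
    Var[fun ω ↦ ∑ i, (s i).indicator (1 : Ω → ℝ) ω; μ] ≤
      #{ij : ι × ι | μ (s ij.1 ∩ s ij.2) ≠ μ (s ij.1) * μ (s ij.2)} := by
  rw [variance_fun_sum (X := fun i ↦ (s i).indicator 1)
    fun i ↦ memLp_indicator_const 2 (hs i) (1 : ℝ) (by simp),
    ← Fintype.sum_prod_type', Finset.card_filter, Nat.cast_sum]
  refine Finset.sum_le_sum fun ij _ ↦ ?_
  rw [covariance_indicator_one (hs ij.1) (hs ij.2), Nat.cast_ite, Nat.cast_one, Nat.cast_zero]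
  split_ifs with h
  · exact (sub_le_self _ (mul_nonneg measureReal_nonneg measureReal_nonneg)).trans
      measureReal_le_one
  · simp [measureReal_def, not_not.mp h, ENNReal.toReal_mul]

end ProbabilityTheory

namespace MeasureTheory

variable {Ω : Type*} [MeasurableSpace Ω] {μ : Measure Ω} [IsFiniteMeasure μ]

lemma ae_tendsto_of_summable_measureReal {f : ℕ → Ω → ℝ} {c : ℝ}
    (h : ∀ ε > 0, Summable fun n ↦ μ.real {ω | ε ≤ |f n ω - c|}) :
    ∀ᵐ ω ∂μ, Tendsto (fun n ↦ f n ω) atTop (𝓝 c) := by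
  have h_ev : ∀ k : ℕ, ∀ᵐ ω ∂μ, ∀ᶠ n in atTop, |f n ω - c| < 1 / (k + 1) := by
    intro k
    have hk : (0 : ℝ) < 1 / (k + 1) := by positivity
    have hsum : ∑' n, μ {ω | 1 / (k + 1) ≤ |f n ω - c|} ≠ ⊤ := by
      have := ENNReal.ofReal_tsum_of_nonneg (fun _ ↦ measureReal_nonneg) (h _ hk)
      simp only [measureReal_def, ne_eq, measure_ne_top, not_false_eq_true,
        ENNReal.ofReal_toReal] at this
      exact this ▸ ENNReal.ofReal_ne_top
    filter_upwards [ae_eventually_notMem hsum] with ω hω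
    exact hω.mono fun n hn ↦ not_le.mp hn
  filter_upwards [ae_all_iff.mpr h_ev] with ω hω
  rw [Metric.tendsto_atTop]
  intro ε hε
  obtain ⟨k, hk⟩ := exists_nat_one_div_lt hε
  obtain ⟨N, hN⟩ := eventually_atTop.mp (hω k)
  exact ⟨N, fun n hn ↦ (hN n hn).trans hk⟩

end MeasureTheory

lemma Nat.pow_le_two_pow_mul_descFactorial {n k : ℕ} (h : 2 * k ≤ n) :
    n ^ k ≤ 2 ^ k * n.descFactorial k :=
  calc n ^ k ≤ (2 * (n + 1 - k)) ^ k := Nat.pow_le_pow_left (by omega) k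
    _ = 2 ^ k * (n + 1 - k) ^ k := Nat.mul_pow ..
    _ ≤ 2 ^ k * n.descFactorial k := Nat.mul_le_mul_left _ (Nat.pow_sub_le_descFactorial n k)

namespace Function.Embedding

variable {ι α : Type*} [Fintype ι] [Fintype α] [DecidableEq ι] [DecidableEq α]

open Fintype in
lemma card_filter_apply_eq_apply_eq_mul_sq_le {i j : ι} (hij : i ≠ j) (a b : α) :
    #{f : ι ↪ α | f i = a ∧ f j = b} * card α ^ 2 ≤ card α ^ card ι := by
  set s : Finset ι := {i, j}ᶜ
  have h_inj : Set.InjOn (fun f : ι ↪ α ↦ fun k : s ↦ f k) {f | f i = a ∧ f j = b} := by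
    rintro f ⟨hfi, hfj⟩ g ⟨hgi, hgj⟩ hfg
    ext k
    by_cases hk : k ∈ s
    · exact congrFun hfg ⟨k, hk⟩
    · obtain rfl | rfl : k = i ∨ k = j := by
        simpa only [s, mem_compl, mem_insert, mem_singleton, not_not] using hk
      exacts [hfi.trans hgi.symm, hfj.trans hgj.symm]
  have h_card : #{f : ι ↪ α | f i = a ∧ f j = b} ≤ card α ^ (card ι - 2) := by
    calc #{f : ι ↪ α | f i = a ∧ f j = b} ≤ card (s → α) :=
          card_le_card_of_injOn _ (fun _ _ ↦ mem_univ _) (by simpa using h_inj)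
      _ = card α ^ (card ι - 2) := by
          rw [card_fun, card_coe, card_compl, card_pair hij]
  have h_two : card ι - 2 + 2 = card ι := by
    have := (card_pair hij).symm.trans_le (card_le_univ {i, j})
    omega
  calc #{f : ι ↪ α | f i = a ∧ f j = b} * card α ^ 2 ≤ card α ^ (card ι - 2) * card α ^ 2 :=
        Nat.mul_le_mul_right _ h_card
    _ = card α ^ card ι := by rw [← pow_add, h_two]

open Fintype in
lemma card_filter_exists_apply_eq_apply_eq_mul_sq_le :
    #{φψ : (ι ↪ α) × (ι ↪ α) | ∃ i j i' j', i' ≠ j' ∧ φψ.2 i' = φψ.1 i ∧ φψ.2 j' = φψ.1 j} *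
      card α ^ 2 ≤ card ι ^ 4 * (card (ι ↪ α) * card α ^ card ι) := by
  set fiber : ι × ι × ι × ι → Finset ((ι ↪ α) × (ι ↪ α)) := fun q ↦
    {φψ | q.2.2.1 ≠ q.2.2.2 ∧ φψ.2 q.2.2.1 = φψ.1 q.1 ∧ φψ.2 q.2.2.2 = φψ.1 q.2.1}
  have h_fiber (q : ι × ι × ι × ι) : #(fiber q) * card α ^ 2 ≤ card (ι ↪ α) * card α ^ card ι := by
    obtain ⟨i, j, i', j'⟩ := q
    by_cases h : i' = j'
    · simp [fiber, h]
    calc #(fiber (i, j, i', j')) * card α ^ 2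
        = ∑ φ : ι ↪ α, #{ψ : ι ↪ α | ψ i' = φ i ∧ ψ j' = φ j} * card α ^ 2 := by
          simp only [fiber, card_filter, sum_mul, Fintype.sum_prod_type, h, ne_eq,
            not_false_eq_true, true_and]
      _ ≤ ∑ _φ : ι ↪ α, card α ^ card ι :=
          sum_le_sum fun φ _ ↦ card_filter_apply_eq_apply_eq_mul_sq_le h (φ i) (φ j)
      _ = card (ι ↪ α) * card α ^ card ι := by rw [sum_const, card_univ, smul_eq_mul]
  have h_sub : ({φψ : (ι ↪ α) × (ι ↪ α) | ∃ i j i' j', i' ≠ j' ∧ φψ.2 i' = φψ.1 i ∧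
      φψ.2 j' = φψ.1 j} : Finset _) ⊆ univ.biUnion fiber := by
    intro φψ hφψ
    obtain ⟨i, j, i', j', h⟩ := (mem_filter.mp hφψ).2
    exact mem_biUnion.mpr ⟨(i, j, i', j'), mem_univ _, mem_filter.mpr ⟨mem_univ _, h⟩⟩
  calc _ ≤ (∑ q, #(fiber q)) * card α ^ 2 :=
        Nat.mul_le_mul_right _ ((card_le_card h_sub).trans card_biUnion_le)
    _ ≤ ∑ _q : ι × ι × ι × ι, card (ι ↪ α) * card α ^ card ι := by
        rw [sum_mul]; exact sum_le_sum fun q _ ↦ h_fiber q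
    _ = card ι ^ 4 * (card (ι ↪ α) * card α ^ card ι) := by
        rw [sum_const, card_univ, smul_eq_mul, card_prod, card_prod, card_prod]; ring

end Function.Embedding

namespace UPair

def ofNe {a b : ℕ} (h : a ≠ b) : UPair := ⟨(min a b, max a b), by omega⟩

lemma ofNe_eq_ofNe_iff {a b c d : ℕ} (hab : a ≠ b) (hcd : c ≠ d) :
    ofNe hab = ofNe hcd ↔ a = c ∧ b = d ∨ a = d ∧ b = c := by
  change (⟨(min a b, max a b), _⟩ : {q : ℕ × ℕ // q.1 < q.2}) = ⟨(min c d, max c d), _⟩ ↔ _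
  rw [Subtype.mk.injEq, Prod.mk.injEq]
  omega

end UPair

lemma CGraph.apply_ofNe (G : CGraph) {a b : ℕ} (h : a ≠ b) :
    G.1 (UPair.ofNe h).1.1 (UPair.ofNe h).1.2 = G.1 a b := by
  rcases le_total a b with hab | hab
  · simp [UPair.ofNe, hab]
  · simp [UPair.ofNe, hab, G.2.1 b a]

abbrev FinUPair (m : ℕ) : Type := {r : Fin m × Fin m // r.1 < r.2}

namespace FinUPair

variable {m n : ℕ}

def map (φ : Fin m ↪ Fin n) (r : FinUPair m) : UPair :=
  UPair.ofNe (a := φ r.1.1) (b := φ r.1.2) (Fin.val_injective.ne (φ.injective.ne r.2.ne))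

lemma map_injective (φ : Fin m ↪ Fin n) : Function.Injective (map φ) := by
  rintro ⟨⟨i, j⟩, hij⟩ ⟨⟨i', j'⟩, hij'⟩ h
  simp only [map, UPair.ofNe_eq_ofNe_iff, Fin.val_inj, φ.injective.eq_iff] at h
  simp only [Subtype.mk.injEq, Prod.mk.injEq]
  rcases h with h | ⟨rfl, rfl⟩
  · exact h
  · exact absurd (hij.trans hij') (lt_irrefl _)

lemma exists_of_map_eq_map {φ ψ : Fin m ↪ Fin n} {r r' : FinUPair m} (h : map φ r = map ψ r') :
    ∃ i j i' j', i' ≠ j' ∧ ψ i' = φ i ∧ ψ j' = φ j := by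
  simp only [map, UPair.ofNe_eq_ofNe_iff, Fin.val_inj] at h
  rcases h with ⟨h₁, h₂⟩ | ⟨h₁, h₂⟩
  · exact ⟨_, _, _, _, r'.2.ne, h₁.symm, h₂.symm⟩
  · exact ⟨_, _, _, _, r'.2.ne, h₂.symm, h₁.symm⟩

end FinUPair

def edgeState (q : UPair) (b : Bool) : Set CGraph := {G | G.1 q.1.1 q.1.2 = b}

lemma edgeState_false (q : UPair) : edgeState q false = (edgeEvent q)ᶜ := by
  ext G
  simp [edgeState, edgeEvent]

lemma measurableSet_edgeEvent (q : UPair) : MeasurableSet (edgeEvent q) := by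
  have h_eval : Measurable fun G : CGraph ↦ G.1 q.1.1 q.1.2 :=
    (measurable_pi_apply _).comp ((measurable_pi_apply _).comp measurable_subtype_coe)
  exact h_eval (measurableSet_singleton true)

lemma measurableSet_generateFrom_edgeState (q : UPair) (b : Bool) :
    MeasurableSet[MeasurableSpace.generateFrom {edgeEvent q}] (edgeState q b) := by
  have h := MeasurableSpace.measurableSet_generateFrom (Set.mem_singleton (edgeEvent q))
  cases b
  · exact edgeState_false q ▸ h.compl
  · exact h

variable {m n : ℕ}

def embeddingEvent (F : FinGraph m) (φ : Fin m ↪ Fin n) : Set CGraph :=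
  {G | ∀ i j, G.1 (φ i) (φ j) = F.1 i j}

lemma embeddingEvent_eq_iInter (F : FinGraph m) (φ : Fin m ↪ Fin n) :
    embeddingEvent F φ = ⋂ r : FinUPair m, edgeState (r.map φ) (F.1 r.1.1 r.1.2) := by
  ext G
  simp only [embeddingEvent, edgeState, FinUPair.map, CGraph.apply_ofNe, Set.mem_ofPred_eq,
    Set.mem_iInter, Subtype.forall, Prod.forall]
  refine ⟨fun h i j _ ↦ h i j, fun h i j ↦ ?_⟩
  rcases lt_trichotomy i j with hij | rfl | hij
  · exact h i j hij
  · rw [G.2.2, F.2.2]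
  · rw [G.2.1, F.2.1]
    exact h j i hij

/-- The `θ` above: the probability that `G(m, p)` is `F`. -/
def FinGraph.gnpProb (p : ℝ) (F : FinGraph m) : ℝ :=
  ∏ q ∈ univ.filter (fun q : Fin m × Fin m ↦ q.1 < q.2), if F.1 q.1 q.2 then p else 1 - p

lemma FinGraph.gnpProb_nonneg {p : ℝ} (hp0 : 0 ≤ p) (hp1 : p ≤ 1) (F : FinGraph m) :
    0 ≤ F.gnpProb p :=
  prod_nonneg fun _ _ ↦ by split_ifs <;> linarith

lemma generateFrom_edgeEvent_le (q : UPair) :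
    MeasurableSpace.generateFrom {edgeEvent q} ≤ (inferInstance : MeasurableSpace CGraph) :=
  MeasurableSpace.generateFrom_le fun _ hs ↦ hs ▸ measurableSet_edgeEvent q

lemma measurableSet_embeddingEvent (F : FinGraph m) (φ : Fin m ↪ Fin n) :
    MeasurableSet (embeddingEvent F φ) := by
  rw [embeddingEvent_eq_iInter]
  exact .iInter fun r ↦ generateFrom_edgeEvent_le _ _ (measurableSet_generateFrom_edgeState _ _)

lemma ind_restrictG_eq_sum_indicator (F : FinGraph m) (n : ℕ) (G : CGraph) :
    (ind F (restrictG n G) : ℝ) = ∑ φ : Fin m ↪ Fin n, (embeddingEvent F φ).indicator 1 G := by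
  classical
  rw [ind, Fintype.card_subtype, card_filter, Nat.cast_sum]
  refine sum_congr rfl fun φ _ ↦ ?_
  by_cases h : ∀ i j, G.1 (φ i) (φ j) = F.1 i j <;>
    simp [h, embeddingEvent, restrictG]

section ErdosRenyi

variable {p : ℝ} {μ : Measure CGraph}

lemma measure_embeddingEvent_inter_of_disjoint (hind : iIndepSet edgeEvent μ) (F : FinGraph m)
    {φ ψ : Fin m ↪ Fin n}
    (h : Disjoint (Set.range (FinUPair.map φ)) (Set.range (FinUPair.map ψ))) :
    μ (embeddingEvent F φ ∩ embeddingEvent F ψ) =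
      μ (embeddingEvent F φ) * μ (embeddingEvent F ψ) := by
  have h_meas (χ : Fin m ↪ Fin n) : MeasurableSet[⨆ q ∈ Set.range (FinUPair.map χ),
      MeasurableSpace.generateFrom {edgeEvent q}] (embeddingEvent F χ) := by
    rw [embeddingEvent_eq_iInter]
    refine MeasurableSet.iInter fun r ↦ ?_
    exact le_iSup₂ (f := fun q (_ : q ∈ Set.range (FinUPair.map χ)) ↦
      MeasurableSpace.generateFrom {edgeEvent q}) (r.map χ) ⟨r, rfl⟩ _
      (measurableSet_generateFrom_edgeState _ _)
  have h_indep := indep_iSup_of_disjoint generateFrom_edgeEvent_le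
    ((iIndepSet_iff_iIndep _ _).mp hind) h
  exact (Indep_iff _ _ _).mp h_indep _ _ (h_meas φ) (h_meas ψ)

variable [IsProbabilityMeasure μ]

lemma measure_edgeState (hp0 : 0 ≤ p) (hmarg : ∀ q, μ (edgeEvent q) = ENNReal.ofReal p)
    (q : UPair) (b : Bool) : μ (edgeState q b) = ENNReal.ofReal (if b then p else 1 - p) := by
  cases b
  · rw [edgeState_false, prob_compl_eq_one_sub (measurableSet_edgeEvent q), hmarg,
      if_neg Bool.false_ne_true, ENNReal.ofReal_sub _ hp0, ENNReal.ofReal_one]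
  · exact hmarg q

lemma measure_embeddingEvent (hp0 : 0 ≤ p) (hp1 : p ≤ 1) (hind : iIndepSet edgeEvent μ)
    (hmarg : ∀ q, μ (edgeEvent q) = ENNReal.ofReal p) (F : FinGraph m) (φ : Fin m ↪ Fin n) :
    μ (embeddingEvent F φ) = ENNReal.ofReal (F.gnpProb p) := by
  have h_indep := ((iIndepSet_iff_iIndep _ _).mp hind).precomp (FinUPair.map_injective φ)
  rw [embeddingEvent_eq_iInter,
    h_indep.meas_iInter fun r ↦ measurableSet_generateFrom_edgeState _ _, FinGraph.gnpProb,
    ENNReal.ofReal_prod_of_nonneg fun _ _ ↦ by split_ifs <;> linarith,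
    prod_subtype _ fun _ ↦ mem_filter_univ _]
  exact prod_congr rfl fun r _ ↦ measure_edgeState hp0 hmarg _ _

lemma integral_sum_indicator_embeddingEvent (hp0 : 0 ≤ p) (hp1 : p ≤ 1)
    (hind : iIndepSet edgeEvent μ) (hmarg : ∀ q, μ (edgeEvent q) = ENNReal.ofReal p)
    (F : FinGraph m) (n : ℕ) :
    μ[fun G ↦ ∑ φ : Fin m ↪ Fin n, (embeddingEvent F φ).indicator 1 G] =
      n.descFactorial m * F.gnpProb p := by
  rw [integral_finsetSum _ fun φ _ ↦
    (integrable_const 1).indicator (measurableSet_embeddingEvent F φ)]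
  simp_rw [integral_indicator_one (measurableSet_embeddingEvent F _), measureReal_def,
    measure_embeddingEvent hp0 hp1 hind hmarg, ENNReal.toReal_ofReal (F.gnpProb_nonneg hp0 hp1),
    sum_const, card_univ, Fintype.card_embedding_eq, Fintype.card_fin, nsmul_eq_mul]

lemma variance_sum_indicator_embeddingEvent_mul_sq_le (hind : iIndepSet edgeEvent μ)
    (F : FinGraph m) (n : ℕ) :
    Var[fun G ↦ ∑ φ : Fin m ↪ Fin n, (embeddingEvent F φ).indicator 1 G; μ] * n ^ 2 ≤
      m ^ 4 * (n.descFactorial m * n ^ m) := by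
  have h_sub : ({φψ : (Fin m ↪ Fin n) × (Fin m ↪ Fin n) | μ (embeddingEvent F φψ.1 ∩
      embeddingEvent F φψ.2) ≠ μ (embeddingEvent F φψ.1) * μ (embeddingEvent F φψ.2)} : Finset _) ⊆
      ({φψ : (Fin m ↪ Fin n) × (Fin m ↪ Fin n) | ∃ i j i' j', i' ≠ j' ∧ φψ.2 i' = φψ.1 i ∧
        φψ.2 j' = φψ.1 j} : Finset _) := by
    intro φψ hφψ
    simp only [mem_filter_univ] at hφψ ⊢
    by_contra h_none
    refine hφψ (measure_embeddingEvent_inter_of_disjoint hind F (Set.disjoint_range_iff.mpr ?_))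
    exact fun r r' h ↦ h_none (FinUPair.exists_of_map_eq_map h)
  have h_count := Function.Embedding.card_filter_exists_apply_eq_apply_eq_mul_sq_le
    (ι := Fin m) (α := Fin n)
  simp only [Fintype.card_fin, Fintype.card_embedding_eq] at h_count
  calc Var[fun G ↦ ∑ φ : Fin m ↪ Fin n, (embeddingEvent F φ).indicator 1 G; μ] * n ^ 2
      ≤ (#{φψ : (Fin m ↪ Fin n) × (Fin m ↪ Fin n) | ∃ i j i' j', i' ≠ j' ∧ φψ.2 i' = φψ.1 i ∧
          φψ.2 j' = φψ.1 j} : ℝ) * n ^ 2 := by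
        gcongr
        exact (variance_sum_indicator_one_le (measurableSet_embeddingEvent F)).trans
          (by exact_mod_cast card_le_card h_sub)
    _ ≤ (m : ℝ) ^ 4 * ((n.descFactorial m : ℝ) * (n : ℝ) ^ m) := by exact_mod_cast h_count

lemma measureReal_abs_ind_div_sub_gnpProb_ge_le (hp0 : 0 ≤ p) (hp1 : p ≤ 1)
    (hind : iIndepSet edgeEvent μ) (hmarg : ∀ q, μ (edgeEvent q) = ENNReal.ofReal p)
    (F : FinGraph m) {ε : ℝ} (hε : 0 < ε) {n : ℕ} (hn : 2 * m ≤ n) (hn₀ : 0 < n) :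
    μ.real {G | ε ≤ |(ind F (restrictG n G) : ℝ) / n.descFactorial m - F.gnpProb p|} ≤
      m ^ 4 * 2 ^ m / ε ^ 2 / n ^ 2 := by
  set D : ℝ := (n.descFactorial m : ℝ)
  set Y : CGraph → ℝ := fun G ↦ ∑ φ : Fin m ↪ Fin n, (embeddingEvent F φ).indicator 1 G
  have hD : 0 < D := Nat.cast_pos.mpr (Nat.descFactorial_pos.mpr (by omega))
  have hY : MemLp Y 2 μ := memLp_finsetSum _ fun φ _ ↦
    memLp_indicator_const 2 (measurableSet_embeddingEvent F φ) (1 : ℝ) (by simp)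
  have h_mean : μ[fun G ↦ Y G * D⁻¹] = F.gnpProb p := by
    rw [integral_mul_const, integral_sum_indicator_embeddingEvent hp0 hp1 hind hmarg,
      mul_right_comm, mul_inv_cancel₀ hD.ne', one_mul]
  have h_var : Var[Y; μ] * n ^ 2 ≤ m ^ 4 * 2 ^ m * D ^ 2 := by
    have h_pow : (n : ℝ) ^ m ≤ 2 ^ m * D := by
      simp only [D]
      exact_mod_cast Nat.pow_le_two_pow_mul_descFactorial hn
    calc Var[Y; μ] * n ^ 2 ≤ m ^ 4 * (D * n ^ m) :=
          variance_sum_indicator_embeddingEvent_mul_sq_le hind F n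
      _ ≤ m ^ 4 * (D * (2 ^ m * D)) := by gcongr
      _ = m ^ 4 * 2 ^ m * D ^ 2 := by ring
  have h_cheb := meas_ge_le_variance_div_sq (hY.mul_const D⁻¹) hε
  rw [h_mean, variance_mul_const] at h_cheb
  simp only [← div_eq_mul_inv] at h_cheb
  simp_rw [ind_restrictG_eq_sum_indicator]
  have h_var_nonneg := variance_nonneg Y μ
  refine (ENNReal.toReal_le_of_le_ofReal (by positivity) h_cheb).trans ?_
  calc Var[Y; μ] * D⁻¹ ^ 2 / ε ^ 2 = Var[Y; μ] * n ^ 2 / (D ^ 2 * ε ^ 2 * n ^ 2) := by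
        field_simp
    _ ≤ m ^ 4 * 2 ^ m * D ^ 2 / (D ^ 2 * ε ^ 2 * n ^ 2) := by gcongr
    _ = m ^ 4 * 2 ^ m / ε ^ 2 / n ^ 2 := by field_simp

end ErdosRenyi

/-- For `Γ ∼ ε_p`, the limiting density of every finite graph `F` exists almost
surely and equals `∏_{i<j} p^{F(i,j)}(1-p)^{1-F(i,j)}`; in particular the graph
limit of `Γ` is deterministic. -/
theorem erdosRenyi_graph_limit (p : ℝ) (hp0 : 0 ≤ p) (hp1 : p ≤ 1)
    (μ : Measure CGraph) [IsProbabilityMeasure μ]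
    (hind : ProbabilityTheory.iIndepSet edgeEvent μ)
    (hmarg : ∀ q : UPair, μ (edgeEvent q) = ENNReal.ofReal p) :
    ∀ (m : ℕ) (F : FinGraph m), ∀ᵐ G ∂μ,
      Filter.Tendsto (fun n => (ind F (restrictG n G) : ℝ) / (Nat.descFactorial n m : ℝ))
        Filter.atTop
        (nhds (∏ q ∈ Finset.univ.filter (fun q : Fin m × Fin m => q.1 < q.2),
          (if F.1 q.1 q.2 then p else 1 - p))) := by
  intro m F
  refine ae_tendsto_of_summable_measureReal fun ε hε ↦ ?_
  refine .of_norm_bounded_eventually_nat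
    ((Real.summable_nat_pow_inv.mpr one_lt_two).mul_left (m ^ 4 * 2 ^ m / ε ^ 2)) ?_
  filter_upwards [Filter.eventually_ge_atTop (2 * m), Filter.eventually_gt_atTop 0] with n hn hn₀
  rw [Real.norm_of_nonneg measureReal_nonneg, ← div_eq_mul_inv]
  exact measureReal_abs_ind_div_sub_gnpProb_ge_le hp0 hp1 hind hmarg F hε hn hn₀
end

section
/- The Markov transition kernel on finite graphs on [n] given by P(F,F') = α^{↑n₀₀} β^{↑n₀₁} β^{↑n₁₀} α^{↑n₁₁} / ((α+β)^{↑n₀•}(α+β)^{↑n₁•}) is reversible with respect to the probability distribution π(F) = (α+β)^{↑n₀}(α+β)^{↑n₁} / (2α+2β)^{↑C(n,2)}; that is, π(F)P(F,F') = π(F')P(F',F) for all graphs F, F' on [n]. -/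
/-- The rising factorial `x^{↑j} = x(x+1)⋯(x+j-1)`. -/
noncomputable def rising (x : ℝ) (j : ℕ) : ℝ := (ascPochhammer ℝ j).eval x

/-- `n_{rs}`: the number of pairs `i < j` with `F(i,j) = r` and `F'(i,j) = s`. -/
def nPair {n : ℕ} (F F' : FinGraph n) (r s : Bool) : ℕ :=
  (Finset.univ.filter
    (fun q : Fin n × Fin n => q.1 < q.2 ∧ F.1 q.1 q.2 = r ∧ F'.1 q.1 q.2 = s)).card

/-- `n_r`: the number of pairs `i < j` with `F(i,j) = r`. -/
def nSingle {n : ℕ} (F : FinGraph n) (r : Bool) : ℕ :=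
  (Finset.univ.filter (fun q : Fin n × Fin n => q.1 < q.2 ∧ F.1 q.1 q.2 = r)).card

/-- The transition kernel
`P(F,F') = α^{↑n₀₀} β^{↑n₀₁} β^{↑n₁₀} α^{↑n₁₁} / ((α+β)^{↑n₀•}(α+β)^{↑n₁•})`. -/
noncomputable def Pker (α β : ℝ) {n : ℕ} (F F' : FinGraph n) : ℝ :=
  rising α (nPair F F' false false) * rising β (nPair F F' false true) *
      rising β (nPair F F' true false) * rising α (nPair F F' true true) /
    (rising (α + β) (nPair F F' false false + nPair F F' false true) *
      rising (α + β) (nPair F F' true false + nPair F F' true true))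

/-- The distribution `π(F) = (α+β)^{↑n₀}(α+β)^{↑n₁} / (2α+2β)^{↑C(n,2)}`. -/
noncomputable def piDist (α β : ℝ) {n : ℕ} (F : FinGraph n) : ℝ :=
  rising (α + β) (nSingle F false) * rising (α + β) (nSingle F true) /
    rising (2 * α + 2 * β) (n.choose 2)

lemma nPair_comm {n : ℕ} (F F' : FinGraph n) (r s : Bool) :
    nPair F' F r s = nPair F F' s r := by
  simp only [nPair, and_comm (a := F'.1 _ _ = r)]

lemma nSingle_eq_nPair_add {n : ℕ} (F F' : FinGraph n) (r : Bool) :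
    nSingle F r = nPair F F' r false + nPair F F' r true := by
  rw [nSingle, nPair, nPair, ← Finset.card_union_of_disjoint
    (Finset.disjoint_filter.2 fun _ _ h₁ h₂ => by simp [h₁.2.2] at h₂)]
  congr 1
  ext q
  rcases h : F'.1 q.1 q.2 <;> simp [h]

/-- The denominator of `P(F, ·)` is the numerator of `π(F)`, leaving an expression that is
symmetric under swapping `F` and `F'`. -/
lemma piDist_mul_Pker {α β : ℝ} (hαβ : 0 < α + β) {n : ℕ} (F F' : FinGraph n) :
    piDist α β F * Pker α β F F' =
      rising α (nPair F F' false false) * rising β (nPair F F' false true) *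
        rising β (nPair F F' true false) * rising α (nPair F F' true true) /
      rising (2 * α + 2 * β) (n.choose 2) := by
  have h₀ : rising (α + β) (nSingle F false) ≠ 0 := (ascPochhammer_pos _ _ hαβ).ne'
  have h₁ : rising (α + β) (nSingle F true) ≠ 0 := (ascPochhammer_pos _ _ hαβ).ne'
  rw [piDist, Pker, ← nSingle_eq_nPair_add, ← nSingle_eq_nPair_add]
  field_simp

/-- The kernel `P` is reversible with respect to `π`:
`π(F)P(F,F') = π(F')P(F',F)` for all graphs `F, F'` on `[n]`. -/
theorem Pker_reversible (α β : ℝ) (hα : 0 < α) (hβ : 0 < β) {n : ℕ}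
    (F F' : FinGraph n) :
    piDist α β F * Pker α β F F' = piDist α β F' * Pker α β F' F := by
  have hαβ : 0 < α + β := add_pos hα hβ
  rw [piDist_mul_Pker hαβ, piDist_mul_Pker hαβ, nPair_comm F' F, nPair_comm F' F,
    nPair_comm F' F, nPair_comm F' F]
  ring
end
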